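/- Let S be a 𝒞-semigroup with extremal rays τ₁,…,τ_t and M = {m₁,…,m_t} ⊆ S \ {0} with m_i ∈ τ_i for each i. Then the set of I(S)-semigroups T that are 𝒞-semigroups whose i-multiplicities satisfy mult_i(T) = m_i for all i is non-empty and finite. -/

import Mathlib

open Pointwise

/-- `S` is an affine semigroup: a finitely generated additive submonoid of `ℕ^p`
(containing `0`). -/
def IsAffine {p : ℕ} (S : Set (Fin p → ℕ)) : Prop :=
  ∃ F : Finset (Fin p → ℕ),
    S = (AddSubmonoid.closure (F : Set (Fin p → ℕ)) : Set (Fin p → ℕ))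

/-- The set of integer points of the rational cone generated by `S`:
`x` is a non-negative rational combination of elements of `S` iff some positive
multiple of `x` lies in the additive monoid generated by `S`. -/
def coneOf {p : ℕ} (S : Set (Fin p → ℕ)) : Set (Fin p → ℕ) :=
  {x | ∃ n : ℕ, 0 < n ∧ n • x ∈ AddSubmonoid.closure S}

/-- A `𝒞`-semigroup: an affine semigroup with finite complement in its cone. -/
def CSemigroup {p : ℕ} (S : Set (Fin p → ℕ)) : Prop :=
  IsAffine S ∧ (coneOf S \ S).Finite

/-- `P` is an ideal of `S`: `P ⊆ S` and `P + S ⊆ P`. -/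
def IsIdealOf {p : ℕ} (S P : Set (Fin p → ℕ)) : Prop :=
  P ⊆ S ∧ P + S ⊆ P

/-- `x ≤_S y` iff `y - x ∈ S`. -/
def leS {p : ℕ} (S : Set (Fin p → ℕ)) (x y : Fin p → ℕ) : Prop :=
  ∃ s ∈ S, x + s = y

/-- A non-empty subset `X ⊆ S` is `S`-incomparable if `x - x' ∉ S` for all
distinct `x, x' ∈ X`. -/
def SIncomparable {p : ℕ} (S X : Set (Fin p → ℕ)) : Prop :=
  X.Nonempty ∧ X ⊆ S ∧ ∀ x ∈ X, ∀ x' ∈ X, x ≠ x' → ¬ leS S x' x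

/-- The minimal generating set of `T`: non-zero elements of `T` that are not a
sum of two non-zero elements of `T`. -/
def msg {p : ℕ} (T : Set (Fin p → ℕ)) : Set (Fin p → ℕ) :=
  {x ∈ T | x ≠ 0 ∧ ¬ ∃ a ∈ T, ∃ b ∈ T, a ≠ 0 ∧ b ≠ 0 ∧ x = a + b}

/-- The Apery set `Ap(S, m) = {s ∈ S : s - m ∉ S}`. -/
def Ap {p : ℕ} (S : Set (Fin p → ℕ)) (m : Fin p → ℕ) : Set (Fin p → ℕ) :=
  {s ∈ S | ¬ ∃ u ∈ S, m + u = s}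

/-- `τ` is an extremal ray of the cone `C`: the set of points of `C` lying on the
ray spanned by some non-zero `v ∈ C`, such that whenever a sum of two elements of
`C` lies in `τ`, both summands lie in `τ`. -/
def IsExtremalRay {p : ℕ} (C τ : Set (Fin p → ℕ)) : Prop :=
  (∃ v : Fin p → ℕ, v ≠ 0 ∧ v ∈ C ∧
    τ = {x ∈ C | ∃ a b : ℕ, 0 < b ∧ b • x = a • v}) ∧
  ∀ x ∈ C, ∀ y ∈ C, x + y ∈ τ → x ∈ τ ∧ y ∈ τ

/-- `τ 1, …, τ t` are (exactly) the extremal rays of the cone `C`. -/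
def RaysOf {p t : ℕ} (C : Set (Fin p → ℕ)) (τ : Fin t → Set (Fin p → ℕ)) : Prop :=
  (∀ i, IsExtremalRay C (τ i)) ∧ Function.Injective τ ∧
    ∀ ρ, IsExtremalRay C ρ → ∃ i, ρ = τ i

/-- `m` is the `i`-multiplicity of `T` along the ray `τ`: the minimum non-zero
element of `τ ∩ T` for the componentwise order. -/
def MultOn {p : ℕ} (τ T : Set (Fin p → ℕ)) (m : Fin p → ℕ) : Prop :=
  m ∈ τ ∧ m ∈ T ∧ m ≠ 0 ∧ ∀ x ∈ τ ∩ T, x ≠ 0 → m ≤ x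

/-- `T` is an `I(S)`-semigroup: an affine semigroup such that `T \ {0}` is an
ideal of `S`. -/
def ISemigroupOf {p : ℕ} (S T : Set (Fin p → ℕ)) : Prop :=
  IsAffine T ∧ 0 ∈ T ∧ IsIdealOf S (T \ {0})

/-- `le` is a monomial order on `ℕ^p`: a total order compatible with addition in
which `0` is the least element. -/
def IsMonomialOrder {p : ℕ} (le : (Fin p → ℕ) → (Fin p → ℕ) → Prop) : Prop :=
  (∀ x, le x x) ∧ (∀ x y z, le x y → le y z → le x z) ∧
  (∀ x y, le x y → le y x → x = y) ∧ (∀ x y, le x y ∨ le y x) ∧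
  (∀ x y z, le x y → le (x + z) (y + z)) ∧ (∀ x, le 0 x)

/-- The pseudo-Frobenius elements of `T`. -/
def PF {p : ℕ} (T : Set (Fin p → ℕ)) : Set (Fin p → ℕ) :=
  {x ∈ coneOf T \ T | ∀ y ∈ T, y ≠ 0 → x + y ∈ T}

/-!
Put `M = {m₁, …, m_t}` and `T₀ = {0} ∪ (M + S)`. An `I(S)`-semigroup `T` with `mult_i(T) = m_i`
contains `M`, hence `T₀` because `T \ {0}` is an `S`-ideal, and `T ⊆ S`. Conversely `T₀` is such a
semigroup: along `τ_i` its minimum is `m_i`, since a sum lying on an extremal ray has both summands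
on it. So everything reduces to the finiteness of `S \ (M + S)`, which also makes `T₀` finitely
generated (by `M + (S \ (M + S))`) and a `𝒞`-semigroup. The rational cone of `S` is spanned by its
extremal rays, hence by `M`; so each `s ∈ S` either has all coefficients of its conical combination
of the `m_i` below `1`, and then `s ≤ ∑ m_i`, or equals `m_i + c` with `c` in the cone, and then
`s ∈ m_i + S` or `s ∈ m_i + (coneOf S \ S)`, a finite set.
-/

open scoped NNRat
open Submodule Set

section ConicalCombinations

variable {E : Type*} [AddCommMonoid E] [PartialOrder E] [IsOrderedAddMonoid E] [Module ℚ≥0 E]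

lemma nonneg_of_mem_span [PosSMulMono ℚ≥0 E] {s : Set E} (hs : ∀ v ∈ s, 0 ≤ v) {x : E}
    (hx : x ∈ span ℚ≥0 s) : 0 ≤ x := by
  induction hx using Submodule.span_induction with
  | mem v hv => exact hs v hv
  | zero => exact le_rfl
  | add _ _ _ _ h₁ h₂ => exact add_nonneg h₁ h₂
  | smul c _ _ h => exact smul_nonneg zero_le h

lemma exists_eq_add_or_le_sum [SMulPosMono ℚ≥0 E] {ι : Type*} [Fintype ι] [DecidableEq ι]
    (w : ι → E) (hw : ∀ i, 0 ≤ w i) {x : E} (hx : x ∈ span ℚ≥0 (range w)) :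
    (∃ i, ∃ y ∈ span ℚ≥0 (range w), x = w i + y) ∨ x ≤ ∑ i, w i := by
  obtain ⟨c, rfl⟩ := (mem_span_range_iff_exists_fun ℚ≥0).1 hx
  by_cases hc : ∃ i, 1 ≤ c i
  · obtain ⟨i, hi⟩ := hc
    have hsingle : Pi.single i 1 ≤ c := fun j => by
      by_cases hj : j = i
      · subst hj; simpa using hi
      · simp [hj]
    refine Or.inl ⟨i, ∑ j, (c - Pi.single i 1 : ι → ℚ≥0) j • w j,
      (mem_span_range_iff_exists_fun ℚ≥0).2 ⟨_, rfl⟩, ?_⟩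
    conv_lhs => rw [← add_tsub_cancel_of_le hsingle]
    simp only [Pi.add_apply, add_smul, Finset.sum_add_distrib, Pi.single_apply, ite_smul,
      one_smul, zero_smul, Finset.sum_ite_eq', Finset.mem_univ, if_true]
  · push Not at hc
    exact Or.inr (Finset.sum_le_sum fun i _ => smul_le_of_le_one_left (hw i) (hc i).le)

lemma exists_irredundant_subset {R M : Type*} [Semiring R] [AddCommMonoid M] [Module R M]
    [DecidableEq M] (s : Finset M) :
    ∃ t ⊆ s, span R (t : Set M) = span R s ∧
      ∀ v ∈ t, v ∉ span R ((t.erase v : Finset M) : Set M) := by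
  induction s using Finset.strongInduction with
  | H s ih =>
  by_cases h : ∀ v ∈ s, v ∉ span R ((s.erase v : Finset M) : Set M)
  · exact ⟨s, subset_rfl, rfl, h⟩
  push Not at h
  obtain ⟨v, hv, hvs⟩ := h
  obtain ⟨t, hts, hspan, hirr⟩ := ih _ (Finset.erase_ssubset hv)
  refine ⟨t, hts.trans (Finset.erase_subset _ _), ?_, hirr⟩
  rw [hspan, ← span_insert_eq_span hvs, ← Finset.coe_insert, Finset.insert_erase hv]

/-- An irredundant generator of a cone of nonnegative vectors spans an extremal ray. -/
lemma exists_eq_smul_of_add_eq_smul {E : Type*} [AddCancelCommMonoid E] [PartialOrder E]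
    [IsOrderedAddMonoid E] [Module ℚ≥0 E] [PosSMulMono ℚ≥0 E] [DecidableEq E] {t : Finset E}
    (ht : ∀ v ∈ t, 0 ≤ v) {v : E} (hv : v ∈ t)
    (hirr : v ∉ span ℚ≥0 ((t.erase v : Finset E) : Set E)) {x y : E}
    (hx : x ∈ span ℚ≥0 (t : Set E)) (hy : y ∈ span ℚ≥0 (t : Set E)) {q : ℚ≥0}
    (hxy : x + y = q • v) : ∃ r : ℚ≥0, x = r • v := by
  rw [← Finset.insert_erase hv, Finset.coe_insert, mem_span_insert] at hx hy
  obtain ⟨a, u, hu, rfl⟩ := hx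
  obtain ⟨b, u', hu', rfl⟩ := hy
  have hsum : (a + b) • v + (u + u') = q • v := by rw [← hxy, add_smul]; abel
  have hnonneg : ∀ w ∈ span ℚ≥0 ((t.erase v : Finset E) : Set E), 0 ≤ w :=
    fun w => nonneg_of_mem_span fun w hw => ht w (Finset.mem_of_mem_erase hw)
  refine ⟨a, ?_⟩
  rcases le_or_gt q (a + b) with hle | hlt
  · obtain ⟨d, hd⟩ := exists_add_of_le hle
    have hzero : d • v + (u + u') = 0 := by
      rw [hd, add_smul, add_assoc] at hsum
      exact add_left_cancel (hsum.trans (add_zero _).symm)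
    have huu : u + u' = 0 := ((add_eq_zero_iff_of_nonneg (smul_nonneg zero_le (ht v hv))
      (add_nonneg (hnonneg u hu) (hnonneg u' hu'))).1 hzero).2
    rw [((add_eq_zero_iff_of_nonneg (hnonneg u hu) (hnonneg u' hu')).1 huu).1, add_zero]
  · obtain ⟨d, hd⟩ := exists_add_of_le hlt.le
    have hd0 : d ≠ 0 := by rintro rfl; simp [hd] at hlt
    have huu : u + u' = d • v := add_left_cancel (hsum.trans (by rw [hd, add_smul]))
    have hv' : d⁻¹ • (u + u') = v := by rw [huu, inv_smul_smul₀ hd0]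
    have hmem := smul_mem (span ℚ≥0 ((t.erase v : Finset E) : Set E)) d⁻¹ (add_mem hu hu')
    exact (hirr (by rwa [hv'] at hmem)).elim

end ConicalCombinations

section Semigroups

variable {p : ℕ}

section RationalCone

def toQ : (Fin p → ℕ) →+ (Fin p → ℚ) := (Nat.castAddMonoidHom ℚ).compLeft (Fin p)

@[simp] lemma toQ_apply (x : Fin p → ℕ) (k : Fin p) : toQ x k = x k := rfl

lemma toQ_injective : Function.Injective (toQ (p := p)) :=
  fun _ _ h => funext fun k => by simpa using congrFun h k

lemma toQ_le_toQ {x y : Fin p → ℕ} : toQ x ≤ toQ y ↔ x ≤ y := by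
  simp only [Pi.le_def, toQ_apply, Nat.cast_le]

lemma toQ_nonneg (x : Fin p → ℕ) : 0 ≤ toQ x := fun k => by simp

def ratCone (A : Set (Fin p → ℕ)) : Submodule ℚ≥0 (Fin p → ℚ) := span ℚ≥0 (toQ '' A)

lemma nonneg_of_mem_ratCone {A : Set (Fin p → ℕ)} {x : Fin p → ℚ} (hx : x ∈ ratCone A) :
    0 ≤ x :=
  nonneg_of_mem_span (by rintro _ ⟨a, -, rfl⟩; exact toQ_nonneg a) hx

lemma exists_nsmul_eq_toQ {A : Set (Fin p → ℕ)} {x : Fin p → ℚ} (hx : x ∈ ratCone A) :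
    ∃ n, 0 < n ∧ ∃ s ∈ AddSubmonoid.closure A, n • x = toQ s := by
  induction hx using Submodule.span_induction with
  | mem x hx =>
    obtain ⟨a, ha, rfl⟩ := hx
    exact ⟨1, one_pos, a, AddSubmonoid.subset_closure ha, one_smul _ _⟩
  | zero => exact ⟨1, one_pos, 0, zero_mem _, by simp⟩
  | add x y _ _ hx hy =>
    obtain ⟨n, hn, s, hs, hns⟩ := hx
    obtain ⟨k, hk, s', hs', hks⟩ := hy
    refine ⟨k * n, by positivity, k • s + n • s', add_mem (nsmul_mem hs k) (nsmul_mem hs' n), ?_⟩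
    rw [map_add, map_nsmul, map_nsmul, ← hns, ← hks, smul_add, mul_smul, mul_comm, mul_smul]
  | smul c x _ hx =>
    obtain ⟨n, hn, s, hs, hns⟩ := hx
    refine ⟨c.den * n, by positivity, c.num • s, nsmul_mem hs _, ?_⟩
    rw [map_nsmul, ← hns, mul_smul, smul_comm n c, ← Nat.cast_smul_eq_nsmul ℚ≥0 c.den,
      ← Nat.cast_smul_eq_nsmul ℚ≥0 c.num, smul_smul, NNRat.den_mul_eq_num]

lemma mem_coneOf_iff {A : Set (Fin p → ℕ)} {x : Fin p → ℕ} :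
    x ∈ coneOf A ↔ toQ x ∈ ratCone A := by
  constructor
  · rintro ⟨n, hn, hnx⟩
    have hclosure : AddSubmonoid.closure A ≤ (ratCone A).toAddSubmonoid.comap toQ :=
      AddSubmonoid.closure_le.2 fun a ha => subset_span (mem_image_of_mem toQ ha)
    have hmem := (ratCone A).smul_mem (n⁻¹ : ℚ≥0) (hclosure hnx)
    rwa [map_nsmul, ← Nat.cast_smul_eq_nsmul ℚ≥0, inv_smul_smul₀ (by positivity)] at hmem
  · intro hx
    obtain ⟨n, hn, s, hs, hns⟩ := exists_nsmul_eq_toQ hx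
    refine ⟨n, hn, ?_⟩
    rwa [toQ_injective (by rw [map_nsmul, hns] : toQ (n • x) = toQ s)]

lemma subset_coneOf (A : Set (Fin p → ℕ)) : A ⊆ coneOf A :=
  fun x hx => ⟨1, one_pos, by simpa using AddSubmonoid.subset_closure hx⟩

lemma coneOf_mono {A B : Set (Fin p → ℕ)} (h : A ⊆ B) : coneOf A ⊆ coneOf B :=
  fun _ ⟨n, hn, hnx⟩ => ⟨n, hn, AddSubmonoid.closure_mono h hnx⟩

lemma coneOf_closure (A : Set (Fin p → ℕ)) :
    coneOf (AddSubmonoid.closure A : Set (Fin p → ℕ)) = coneOf A := by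
  simp only [coneOf, AddSubmonoid.closure_eq]

end RationalCone

section Rays

/-- The extremal rays in `IsExtremalRay` are the sets `{x ∈ C | OnRay v x}`. -/
def OnRay (v x : Fin p → ℕ) : Prop := ∃ a b : ℕ, 0 < b ∧ b • x = a • v

lemma onRay_iff {v x : Fin p → ℕ} : OnRay v x ↔ ∃ r : ℚ≥0, toQ x = r • toQ v := by
  constructor
  · rintro ⟨a, b, hb, hab⟩
    refine ⟨(b : ℚ≥0)⁻¹ * a, ?_⟩
    have hQ := congrArg toQ hab
    rw [map_nsmul, map_nsmul, ← Nat.cast_smul_eq_nsmul ℚ≥0 b,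
      ← Nat.cast_smul_eq_nsmul ℚ≥0 a] at hQ
    rw [mul_smul, ← hQ, inv_smul_smul₀ (by positivity)]
  · rintro ⟨r, hr⟩
    refine ⟨r.num, r.den, r.den_pos, toQ_injective ?_⟩
    rw [map_nsmul, map_nsmul, hr, ← Nat.cast_smul_eq_nsmul ℚ≥0 r.den,
      ← Nat.cast_smul_eq_nsmul ℚ≥0 r.num, smul_smul, NNRat.den_mul_eq_num]

lemma OnRay.trans {u v x : Fin p → ℕ} (hx : OnRay v x) (hv : OnRay u v) : OnRay u x := by
  obtain ⟨r, hr⟩ := onRay_iff.1 hx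
  obtain ⟨s, hs⟩ := onRay_iff.1 hv
  exact onRay_iff.2 ⟨r * s, by rw [hr, hs, smul_smul]⟩

lemma OnRay.symm {v x : Fin p → ℕ} (hx : OnRay v x) (hx0 : x ≠ 0) : OnRay x v := by
  obtain ⟨r, hr⟩ := onRay_iff.1 hx
  have hr0 : r ≠ 0 := by
    rintro rfl
    exact hx0 (toQ_injective (by rw [hr, zero_smul, map_zero]))
  exact onRay_iff.2 ⟨r⁻¹, by rw [hr, inv_smul_smul₀ hr0]⟩

lemma IsExtremalRay.subset_of_mem {C τ₁ τ₂ : Set (Fin p → ℕ)} (h₁ : IsExtremalRay C τ₁)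
    (h₂ : IsExtremalRay C τ₂) {w : Fin p → ℕ} (hw : w ≠ 0) (hw₁ : w ∈ τ₁) (hw₂ : w ∈ τ₂) :
    τ₁ ⊆ τ₂ := by
  obtain ⟨v₁, -, -, rfl⟩ := h₁.1
  obtain ⟨v₂, -, -, rfl⟩ := h₂.1
  exact fun x ⟨hxC, hx⟩ => ⟨hxC, OnRay.trans (OnRay.trans hx (OnRay.symm hw₁.2 hw)) hw₂.2⟩

lemma IsExtremalRay.eq_of_mem {C τ₁ τ₂ : Set (Fin p → ℕ)} (h₁ : IsExtremalRay C τ₁)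
    (h₂ : IsExtremalRay C τ₂) {w : Fin p → ℕ} (hw : w ≠ 0) (hw₁ : w ∈ τ₁) (hw₂ : w ∈ τ₂) :
    τ₁ = τ₂ :=
  (h₁.subset_of_mem h₂ hw hw₁ hw₂).antisymm (h₂.subset_of_mem h₁ hw hw₂ hw₁)

lemma isExtremalRay_of_irredundant [DecidableEq (Fin p → ℚ)] {A : Set (Fin p → ℕ)}
    {t : Finset (Fin p → ℚ)} (hspan : span ℚ≥0 (t : Set (Fin p → ℚ)) = ratCone A)
    {g : Fin p → ℕ} (hg : toQ g ∈ t)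
    (hirr : toQ g ∉ span ℚ≥0 ((t.erase (toQ g) : Finset _) : Set (Fin p → ℚ))) :
    IsExtremalRay (coneOf A) {x ∈ coneOf A | OnRay g x} := by
  have hcone : ∀ {x}, x ∈ coneOf A ↔ toQ x ∈ span ℚ≥0 (t : Set (Fin p → ℚ)) := by
    rw [hspan]; exact mem_coneOf_iff
  have ht : ∀ v ∈ t, 0 ≤ v := fun v hv => nonneg_of_mem_ratCone (hspan ▸ subset_span hv)
  refine ⟨⟨g, ?_, hcone.2 (subset_span hg), rfl⟩, ?_⟩
  · rintro rfl
    exact hirr (by simp)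
  · rintro x hx y hy ⟨-, hxy⟩
    obtain ⟨q, hq⟩ := onRay_iff.1 hxy
    rw [map_add] at hq
    obtain ⟨r, hr⟩ := exists_eq_smul_of_add_eq_smul ht hg hirr (hcone.1 hx) (hcone.1 hy) hq
    obtain ⟨r', hr'⟩ := exists_eq_smul_of_add_eq_smul ht hg hirr (hcone.1 hy) (hcone.1 hx)
      ((add_comm _ _).trans hq)
    exact ⟨⟨hx, onRay_iff.2 ⟨r, hr⟩⟩, ⟨hy, onRay_iff.2 ⟨r', hr'⟩⟩⟩

lemma ratCone_le_span_of_rays {t : ℕ} {F : Finset (Fin p → ℕ)} {τ : Fin t → Set (Fin p → ℕ)}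
    (hray : ∀ ρ, IsExtremalRay (coneOf (F : Set (Fin p → ℕ))) ρ → ∃ i, ρ = τ i)
    {m : Fin t → Fin p → ℕ} (hm : ∀ i, m i ∈ τ i ∧ m i ≠ 0) :
    ratCone (F : Set (Fin p → ℕ)) ≤ span ℚ≥0 (range (toQ ∘ m)) := by
  classical
  obtain ⟨u, hu, hspan, hirr⟩ := exists_irredundant_subset (R := ℚ≥0) (F.image toQ)
  rw [Finset.coe_image] at hspan
  rw [ratCone, ← hspan, span_le]
  -- each irredundant generator spans an extremal ray `τ i`, so it is a multiple of `m i`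
  intro v hv
  obtain ⟨g, -, rfl⟩ := Finset.mem_image.1 (hu hv)
  obtain ⟨i, hi⟩ := hray _ (isExtremalRay_of_irredundant hspan hv (hirr _ hv))
  have hmi : m i ∈ {x ∈ coneOf (F : Set (Fin p → ℕ)) | OnRay g x} := hi ▸ (hm i).1
  obtain ⟨r, hr⟩ := onRay_iff.1 (OnRay.symm hmi.2 (hm i).2)
  rw [SetLike.mem_coe, hr]
  exact smul_mem _ _ (subset_span ⟨i, rfl⟩)

end Rays

lemma CSemigroup.finite_diff_range_add {t : ℕ} {S : Set (Fin p → ℕ)} (hS : CSemigroup S)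
    {τ : Fin t → Set (Fin p → ℕ)} (hray : ∀ ρ, IsExtremalRay (coneOf S) ρ → ∃ i, ρ = τ i)
    {m : Fin t → Fin p → ℕ} (hm : ∀ i, m i ∈ S ∧ m i ∈ τ i ∧ m i ≠ 0) :
    (S \ (range m + S)).Finite := by
  classical
  obtain ⟨⟨F, rfl⟩, hG⟩ := hS
  rw [coneOf_closure] at hray hG
  have hspan : ratCone (F : Set (Fin p → ℕ)) = span ℚ≥0 (range (toQ ∘ m)) := by
    refine le_antisymm (ratCone_le_span_of_rays hray fun i => (hm i).2) (span_le.2 ?_)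
    rintro _ ⟨i, rfl⟩
    exact mem_coneOf_iff.1 (coneOf_closure (F : Set (Fin p → ℕ)) ▸ subset_coneOf _ (hm i).1)
  have hcone : ∀ {x}, x ∈ coneOf (F : Set (Fin p → ℕ)) ↔ toQ x ∈ span ℚ≥0 (range (toQ ∘ m)) :=
    mem_coneOf_iff.trans (by rw [hspan])
  refine ((finite_iUnion fun i => hG.image (m i + ·)).union (finite_Iic (∑ i, m i))).subset ?_
  rintro s ⟨hs, hsM⟩
  have hsQ := hcone.1 (coneOf_closure (F : Set (Fin p → ℕ)) ▸ subset_coneOf _ hs)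
  rcases exists_eq_add_or_le_sum _ (fun i => toQ_nonneg (m i)) hsQ with ⟨i, y, hy, hsy⟩ | hle
  · have hmi : m i ≤ s :=
      toQ_le_toQ.1 (hsy ▸ le_add_of_nonneg_right (nonneg_of_mem_span (by
        rintro _ ⟨j, rfl⟩; exact toQ_nonneg (m j)) hy))
    obtain ⟨d, rfl⟩ := exists_add_of_le hmi
    have hd : toQ d = y := add_left_cancel (by rw [← map_add]; exact hsy)
    exact Or.inl (mem_iUnion.2 ⟨i, d, ⟨hcone.2 (hd ▸ hy),
      fun hdS => hsM ⟨m i, ⟨i, rfl⟩, d, hdS, rfl⟩⟩, rfl⟩)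
  · exact Or.inr (toQ_le_toQ.1 (by simpa [map_sum] using hle))

section IdealSemigroup

variable (S : AddSubmonoid (Fin p → ℕ)) {M : Set (Fin p → ℕ)}

/-- The least `I(S)`-semigroup containing `M`, when `0 ∉ M`. -/
def idealSemigroup (M : Set (Fin p → ℕ)) : Set (Fin p → ℕ) := insert 0 (M + (S : Set (Fin p → ℕ)))

variable {S}

lemma zero_notMem_add (h0 : (0 : Fin p → ℕ) ∉ M) : (0 : Fin p → ℕ) ∉ M + (S : Set (Fin p → ℕ)) := by
  rintro ⟨a, ha, b, -, hab⟩
  exact h0 ((add_eq_zero.1 hab).1 ▸ ha)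

lemma idealSemigroup_subset (hMS : M ⊆ S) : idealSemigroup S M ⊆ S := by
  rintro _ (rfl | ⟨a, ha, b, hb, rfl⟩)
  · exact S.zero_mem
  · exact S.add_mem (hMS ha) hb

lemma isIdealOf_add (hMS : M ⊆ S) :
    IsIdealOf (S : Set (Fin p → ℕ)) (M + (S : Set (Fin p → ℕ))) := by
  refine ⟨fun x hx => idealSemigroup_subset hMS (Or.inr hx), ?_⟩
  rw [add_assoc]
  exact add_subset_add_left (by rw [AddSubmonoid.coe_add_self_eq])

lemma isIdealOf_idealSemigroup (hMS : M ⊆ S) (h0 : (0 : Fin p → ℕ) ∉ M) :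
    IsIdealOf (S : Set (Fin p → ℕ)) (idealSemigroup S M \ {0}) := by
  rw [idealSemigroup, insert_sdiff_self_of_notMem (zero_notMem_add h0)]
  exact isIdealOf_add hMS

lemma add_mem_idealSemigroup (hMS : M ⊆ S) {x y : Fin p → ℕ} (hx : x ∈ idealSemigroup S M)
    (hy : y ∈ idealSemigroup S M) : x + y ∈ idealSemigroup S M := by
  rcases hx with rfl | hx
  · rwa [zero_add]
  · exact Or.inr ((isIdealOf_add hMS).2 (add_mem_add hx (idealSemigroup_subset hMS hy)))

-- Peel elements of `M` off `s` until it leaves `M + S`.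
lemma add_mem_closure (h0 : (0 : Fin p → ℕ) ∉ M) {s : Fin p → ℕ} (hs : s ∈ S) {a : Fin p → ℕ}
    (ha : a ∈ M) : a + s ∈ AddSubmonoid.closure (M + ((S : Set (Fin p → ℕ)) \ (M + S))) := by
  induction s using WellFoundedLT.induction generalizing a with
  | ind s ih =>
  by_cases hsM : s ∈ M + S
  · obtain ⟨b, hb, s', hs', rfl⟩ := hsM
    have hb0 : b ≠ 0 := ne_of_mem_of_not_mem hb h0
    have hlt : s' < b + s' := lt_of_le_of_ne le_add_self (by simpa [eq_comm] using hb0)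
    have ha' : a ∈ AddSubmonoid.closure (M + ((S : Set (Fin p → ℕ)) \ (M + S))) :=
      AddSubmonoid.subset_closure ⟨a, ha, 0, ⟨S.zero_mem, zero_notMem_add h0⟩, add_zero a⟩
    exact add_mem ha' (ih s' hlt hs' hb)
  · exact AddSubmonoid.subset_closure ⟨a, ha, s, ⟨hs, hsM⟩, rfl⟩

lemma idealSemigroup_eq_closure (hMS : M ⊆ S) (h0 : (0 : Fin p → ℕ) ∉ M) :
    idealSemigroup S M = AddSubmonoid.closure (M + ((S : Set (Fin p → ℕ)) \ (M + S))) := by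
  refine Subset.antisymm ?_ fun x hx => ?_
  · rintro _ (rfl | ⟨a, ha, s, hs, rfl⟩)
    · exact zero_mem _
    · exact add_mem_closure h0 hs ha
  · induction hx using AddSubmonoid.closure_induction with
    | mem x hx =>
      obtain ⟨a, ha, s, hs, rfl⟩ := hx
      exact Or.inr ⟨a, ha, s, hs.1, rfl⟩
    | zero => exact mem_insert _ _
    | add x y _ _ hx hy => exact add_mem_idealSemigroup hMS hx hy

lemma cSemigroup_idealSemigroup (hS : (coneOf (S : Set (Fin p → ℕ)) \ S).Finite)
    (hMS : M ⊆ S) (h0 : (0 : Fin p → ℕ) ∉ M) (hM : M.Finite)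
    (hfin : ((S : Set (Fin p → ℕ)) \ (M + S)).Finite) :
    CSemigroup (idealSemigroup S M) := by
  refine ⟨⟨(hM.add hfin).toFinset, by rw [Finite.coe_toFinset, idealSemigroup_eq_closure hMS h0]⟩,
    (hS.union (hfin.subset (sdiff_subset_sdiff_right (subset_insert 0 _)))).subset ?_⟩
  rintro x ⟨hx, hxT⟩
  by_cases hxS : x ∈ S
  · exact Or.inr ⟨hxS, hxT⟩
  · exact Or.inl ⟨coneOf_mono (idealSemigroup_subset hMS) hx, hxS⟩

lemma multOn_idealSemigroup {t : ℕ} {τ : Fin t → Set (Fin p → ℕ)}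
    (hτ : RaysOf (coneOf (S : Set (Fin p → ℕ))) τ) {m : Fin t → Fin p → ℕ}
    (hm : ∀ i, m i ∈ S ∧ m i ∈ τ i ∧ m i ≠ 0) (i : Fin t) :
    MultOn (τ i) (idealSemigroup S (range m)) (m i) := by
  refine ⟨(hm i).2.1, Or.inr ⟨m i, ⟨i, rfl⟩, 0, S.zero_mem, add_zero _⟩, (hm i).2.2, ?_⟩
  rintro _ ⟨hxτ, rfl | ⟨_, ⟨j, rfl⟩, s, hs, rfl⟩⟩ hx0
  · exact absurd rfl hx0
  have hji : m j ∈ τ i :=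
    ((hτ.1 i).2 _ (subset_coneOf _ (hm j).1) _ (subset_coneOf _ hs) hxτ).1
  obtain rfl : j = i := hτ.2.1 ((hτ.1 j).eq_of_mem (hτ.1 i) (hm j).2.2 (hm j).2.1 hji)
  exact le_self_add

lemma ISemigroupOf.idealSemigroup_subset {T : Set (Fin p → ℕ)}
    (hT : ISemigroupOf (S : Set (Fin p → ℕ)) T) (hMT : M ⊆ T) (h0 : (0 : Fin p → ℕ) ∉ M) :
    idealSemigroup S M ⊆ T := by
  rintro _ (rfl | ⟨a, ha, s, hs, rfl⟩)
  · exact hT.2.1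
  · exact (hT.2.2.2 (add_mem_add ⟨hMT ha, ne_of_mem_of_not_mem ha h0⟩ hs)).1

lemma ISemigroupOf.subset {T : Set (Fin p → ℕ)} (hT : ISemigroupOf (S : Set (Fin p → ℕ)) T) :
    T ⊆ S := by
  intro x hx
  rcases eq_or_ne x 0 with rfl | hx0
  · exact S.zero_mem
  · exact hT.2.2.1 ⟨hx, hx0⟩

end IdealSemigroup

end Semigroups

lemma Set.Finite.setOf_subset_subset {α : Type*} {A B : Set α} (h : (B \ A).Finite) :
    {T | A ⊆ T ∧ T ⊆ B}.Finite :=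
  (h.finite_subsets.image (A ∪ ·)).subset fun T ⟨hAT, hTB⟩ =>
    ⟨T \ A, sdiff_subset_sdiff_left hTB, union_sdiff_cancel hAT⟩

/-- Given a `𝒞`-semigroup `S` with extremal rays `τ 1, …, τ t` and
`m i ∈ τ i \ {0}` in `S`, the set of `I(S)`-semigroups that are `𝒞`-semigroups
whose `i`-multiplicities are the `m i` is non-empty and finite. -/
theorem statement14 {p t : ℕ} (S : Set (Fin p → ℕ))
    (τ : Fin t → Set (Fin p → ℕ)) (hS : CSemigroup S)
    (hτ : RaysOf (coneOf S) τ) (m : Fin t → (Fin p → ℕ))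
    (hm : ∀ i, m i ∈ S ∧ m i ∈ τ i ∧ m i ≠ 0) :
    {T : Set (Fin p → ℕ) | ISemigroupOf S T ∧ CSemigroup T ∧
        ∀ i, MultOn (τ i) T (m i)}.Nonempty ∧
    {T : Set (Fin p → ℕ) | ISemigroupOf S T ∧ CSemigroup T ∧
        ∀ i, MultOn (τ i) T (m i)}.Finite := by
  have hfin := hS.finite_diff_range_add hτ.2.2 hm
  obtain ⟨⟨F, rfl⟩, hG⟩ := hS
  have hMS : range m ⊆ AddSubmonoid.closure (F : Set (Fin p → ℕ)) :=
    range_subset_iff.2 fun i => (hm i).1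
  have h0 : (0 : Fin p → ℕ) ∉ range m := fun ⟨i, hi⟩ => (hm i).2.2 hi
  have hT₀ := cSemigroup_idealSemigroup hG hMS h0 (finite_range m) hfin
  refine ⟨⟨idealSemigroup _ (range m), ⟨hT₀.1, mem_insert _ _, isIdealOf_idealSemigroup hMS h0⟩,
    hT₀, multOn_idealSemigroup hτ hm⟩, ?_⟩
  refine (hfin.subset (sdiff_subset_sdiff_right (subset_insert 0 _))).setOf_subset_subset.subset ?_
  rintro T ⟨hT, -, hTm⟩
  exact ⟨hT.idealSemigroup_subset (range_subset_iff.2 fun i => (hTm i).2.1) h0, hT.subset⟩
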